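/- arXiv:1202.0095 — 2 statements merged into one kernel-verified Lean document; each statement's English description precedes it below -/
import Mathlib

section
/- Let K be a field of characteristic zero and let S and C be types. Consider the Lie algebra morphism φ : FreeLieAlgebra K (C × List S) → FreeLieAlgebra K (S ⊕ C) induced by sending a generator (c, [s₁, …, s_k]) to the left-normed iterated bracket ⁅⋯⁅⁅ι(inr c), ι(inl s₁)⁆, ι(inl s₂)⁆, ⋯, ι(inl s_k)⁆ (equal to ι(inr c) when the list is empty). Then φ is injective and its image is exactly the Lie ideal of FreeLieAlgebra K (S ⊕ C) generated by the image of C; in particular, this Lie ideal is a free Lie algebra on the set C × List S. -/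
/-!
Send `FreeLieAlgebra R (S ⊕ C)` to the semidirect sum
`FreeLieAlgebra R (C × List S) ⋊ FreeLieAlgebra R S` by `c ↦ (c, [])` and `s ↦ s`, where `s` acts
on the first factor through the derivation `D_s : (c, l) ↦ (c, l ++ [s])`. Composed with `φ` this
is the inclusion of the first factor, so `φ` is injective. The identity `⁅φ m, s⁆ = φ (D_s m)`
shows that every generator of `FreeLieAlgebra R (S ⊕ C)` normalises the range of `φ`, which is
therefore an ideal; it contains every `c` and lies in the ideal they generate.

A derivation of a free Lie algebra with prescribed values `f` on the generators is the second
component of the lift of `x ↦ (x, f x)` to the trivial extension `FreeLieAlgebra R X ⋉ M`: the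
first component of that lift is the identity.
-/

open LieModule.Cohomology

namespace LieAlgebra.ofTwoCocycle

variable {R L M : Type*} [CommRing R] [LieRing L] [LieAlgebra R L] [AddCommGroup M] [Module R M]
  [LieRingModule L M] [LieModule R L M] (c : twoCocycle R L M)

@[simps]
def fstHom : ofTwoCocycle c →ₗ⁅R⁆ L where
  toFun x := ((ofProd c).symm x).1
  map_add' _ _ := rfl
  map_smul' _ _ := rfl
  map_lie' {_ _} := by simp [bracket_ofTwoCocycle]

@[simps]
def sndLinearMap : ofTwoCocycle c →ₗ[R] M where
  toFun x := ((ofProd c).symm x).2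
  map_add' _ _ := rfl
  map_smul' _ _ := rfl

end LieAlgebra.ofTwoCocycle

namespace FreeLieAlgebra

variable {R X : Type*} [CommRing R]

theorem lieSpan_range_of :
    LieSubalgebra.lieSpan R (FreeLieAlgebra R X) (Set.range (of R)) = ⊤ := by
  set A := LieSubalgebra.lieSpan R (FreeLieAlgebra R X) (Set.range (of R))
  let g := lift R fun x => (⟨of R x, LieSubalgebra.subset_lieSpan ⟨x, rfl⟩⟩ : A)
  have hg : A.incl.comp g = LieHom.id := hom_ext fun x => by simp [g]
  refine eq_top_iff.2 fun m _ => ?_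
  have h := DFunLike.congr_fun hg m
  simp only [LieHom.comp_apply, LieSubalgebra.coe_incl, LieHom.id_apply] at h
  exact h ▸ (g m).2

theorem range_eq_lieSpan {L : Type*} [LieRing L] [LieAlgebra R L]
    (f : FreeLieAlgebra R X →ₗ⁅R⁆ L) :
    f.range = LieSubalgebra.lieSpan R L (Set.range (f ∘ of R)) := by
  rw [LieHom.range_eq_map, ← lieSpan_range_of, LieSubalgebra.map_lieSpan, ← Set.range_comp]

section Derivation

open LieAlgebra

variable {M : Type*} [AddCommGroup M] [Module R M] [LieRingModule (FreeLieAlgebra R X) M]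
  [LieModule R (FreeLieAlgebra R X) M]

variable (R) in
/-- `ofTwoCocycle 0` is the trivial extension `FreeLieAlgebra R X ⋉ M`. -/
noncomputable def liftToTrivialExtension (f : X → M) :
    FreeLieAlgebra R X →ₗ⁅R⁆ ofTwoCocycle (0 : twoCocycle R (FreeLieAlgebra R X) M) :=
  lift R fun x => ofProd _ (of R x, f x)

theorem fstHom_liftToTrivialExtension (f : X → M) (m : FreeLieAlgebra R X) :
    ofTwoCocycle.fstHom (0 : twoCocycle R (FreeLieAlgebra R X) M)
      (liftToTrivialExtension R f m) = m := by
  have h : (ofTwoCocycle.fstHom _).comp (liftToTrivialExtension R f) = LieHom.id :=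
    hom_ext fun x => by simp [liftToTrivialExtension]
  exact DFunLike.congr_fun h m

variable (R) in
noncomputable def liftDerivation (f : X → M) : LieDerivation R (FreeLieAlgebra R X) M where
  toLinearMap := ofTwoCocycle.sndLinearMap 0 ∘ₗ (liftToTrivialExtension R f).toLinearMap
  leibniz' a b := by
    have h := fstHom_liftToTrivialExtension (R := R) f
    simp only [ofTwoCocycle.fstHom_apply] at h
    simp [LieHom.map_lie, bracket_ofTwoCocycle, h]

@[simp]
theorem liftDerivation_of (f : X → M) (x : X) : liftDerivation R f (of R x) = f x := by
  change ofTwoCocycle.sndLinearMap _ (lift R _ (of R x)) = f x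
  simp

end Derivation

end FreeLieAlgebra

namespace LazardElimination

open FreeLieAlgebra LieAlgebra

variable (R S C : Type*) [CommRing R]

noncomputable def lazardMap : FreeLieAlgebra R (C × List S) →ₗ⁅R⁆ FreeLieAlgebra R (S ⊕ C) :=
  lift R fun p => p.2.foldl (fun x s => ⁅x, of R (Sum.inl s)⁆) (of R (Sum.inr p.1))

noncomputable def appendDerivation (s : S) :
    LieDerivation R (FreeLieAlgebra R (C × List S)) (FreeLieAlgebra R (C × List S)) :=
  liftDerivation R fun p => of R (p.1, p.2 ++ [s])

/-- The sign makes `⁅inl m, inr (of s)⁆ = inl (appendDerivation s m)` in the semidirect sum. -/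
noncomputable def appendAction :
    FreeLieAlgebra R S →ₗ⁅R⁆
      LieDerivation R (FreeLieAlgebra R (C × List S)) (FreeLieAlgebra R (C × List S)) :=
  lift R fun s => -appendDerivation R S C s

noncomputable def eliminationHom :
    FreeLieAlgebra R (S ⊕ C) →ₗ⁅R⁆
      FreeLieAlgebra R (C × List S) ⋊⁅appendAction R S C⁆ FreeLieAlgebra R S :=
  lift R <| Sum.elim (fun s => SemiDirectSum.inr _ (of R s))
    (fun c => SemiDirectSum.inl _ (of R (c, [])))

variable {R S C}

theorem lazardMap_of_nil (c : C) :
    lazardMap R S C (of R (c, [])) = of R (Sum.inr c) := by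
  simp [lazardMap]

theorem lazardMap_of_append_singleton (c : C) (l : List S) (s : S) :
    lazardMap R S C (of R (c, l ++ [s])) = ⁅lazardMap R S C (of R (c, l)), of R (Sum.inl s)⁆ := by
  simp [lazardMap]

theorem lazardMap_appendDerivation (s : S) (m : FreeLieAlgebra R (C × List S)) :
    lazardMap R S C (appendDerivation R S C s m) = ⁅lazardMap R S C m, of R (Sum.inl s)⁆ := by
  have hm : m ∈ LieSubalgebra.lieSpan R _ (Set.range (of R)) := by
    rw [lieSpan_range_of]
    exact LieSubalgebra.mem_top m
  induction hm using LieSubalgebra.lieSpan_induction with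
  | mem _ h =>
    obtain ⟨⟨c, l⟩, rfl⟩ := h
    rw [appendDerivation, liftDerivation_of, lazardMap_of_append_singleton]
  | zero => simp
  | add _ _ _ _ ha hb => simp [ha, hb]
  | smul _ _ _ h => simp [h]
  | lie a b _ _ ha hb =>
    rw [LieDerivation.apply_lie_eq_add, map_add, LieHom.map_lie, LieHom.map_lie, ha, hb,
      LieHom.map_lie, lie_lie (lazardMap R S C a) (lazardMap R S C b),
      ← lie_skew ⁅lazardMap R S C a, _⁆]
    abel

@[simp]
theorem appendAction_of (s : S) :
    appendAction R S C (of R s) = -appendDerivation R S C s :=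
  lift_of_apply _ _

@[simp]
theorem eliminationHom_of_inl (s : S) :
    eliminationHom R S C (of R (Sum.inl s)) = SemiDirectSum.inr _ (of R s) :=
  lift_of_apply _ _

@[simp]
theorem eliminationHom_of_inr (c : C) :
    eliminationHom R S C (of R (Sum.inr c)) = SemiDirectSum.inl _ (of R (c, [])) :=
  lift_of_apply _ _

theorem eliminationHom_comp_lazardMap :
    (eliminationHom R S C).comp (lazardMap R S C) = SemiDirectSum.inl _ := by
  refine hom_ext fun ⟨c, l⟩ => ?_
  induction l using List.reverseRecOn with
  | nil => simp [lazardMap_of_nil]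
  | append_singleton l s ih =>
    simp only [LieHom.comp_apply] at ih ⊢
    rw [lazardMap_of_append_singleton, LieHom.map_lie, ih]
    ext <;> simp [appendDerivation]

theorem lazardMap_injective : Function.Injective (lazardMap R S C) := by
  refine Function.Injective.of_comp (f := eliminationHom R S C) ?_
  rw [← LieHom.coe_comp, eliminationHom_comp_lazardMap]
  exact SemiDirectSum.inl_injective _

theorem normalizer_range_lazardMap : (lazardMap R S C).range.normalizer = ⊤ := by
  rw [eq_top_iff, ← lieSpan_range_of, LieSubalgebra.lieSpan_le]
  rintro _ ⟨s | c, rfl⟩ <;> rw [SetLike.mem_coe]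
  · rw [LieSubalgebra.mem_normalizer_iff]
    intro y hy
    obtain ⟨m, rfl⟩ := (LieHom.mem_range _ y).1 hy
    refine ⟨-appendDerivation R S C s m, ?_⟩
    rw [← lie_skew, ← lazardMap_appendDerivation, map_neg]
    rfl
  · exact LieSubalgebra.le_normalizer _ ⟨of R (c, []), lazardMap_of_nil c⟩

theorem lazardMap_isIdealMorphism : (lazardMap R S C).IsIdealMorphism := by
  rw [LieHom.isIdealMorphism_iff]
  intro x m
  have hx : x ∈ (lazardMap R S C).range.normalizer := by
    rw [normalizer_range_lazardMap]
    exact LieSubalgebra.mem_top x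
  obtain ⟨z, hz⟩ := (LieSubalgebra.mem_normalizer_iff _ x).1 hx _ (LieHom.mem_range_self _ m)
  exact ⟨z, hz.symm⟩

theorem idealRange_lazardMap :
    (lazardMap R S C).idealRange =
      LieSubmodule.lieSpan R (FreeLieAlgebra R (S ⊕ C))
        (Set.range fun c : C => of R (Sum.inr c : S ⊕ C)) := by
  set J := LieSubmodule.lieSpan R (FreeLieAlgebra R (S ⊕ C))
    (Set.range fun c : C => of R (Sum.inr c : S ⊕ C))
  have hgen (p : C × List S) : lazardMap R S C (of R p) ∈ J := by
    obtain ⟨c, l⟩ := p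
    induction l using List.reverseRecOn with
    | nil =>
      rw [lazardMap_of_nil]
      exact LieSubmodule.subset_lieSpan ⟨c, rfl⟩
    | append_singleton l s ih =>
      rw [lazardMap_of_append_singleton]
      exact lie_mem_left R _ J _ _ ih
  have hrange : (lazardMap R S C).range ≤ LieIdeal.toLieSubalgebra R _ J := by
    rw [range_eq_lieSpan, LieSubalgebra.lieSpan_le]
    rintro _ ⟨p, rfl⟩
    exact hgen p
  refine le_antisymm ?_ ?_
  · rw [LieHom.idealRange_eq_lieSpan_range, LieSubmodule.lieSpan_le]
    exact hrange
  · rw [LieSubmodule.lieSpan_le]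
    rintro _ ⟨c, rfl⟩
    dsimp only
    rw [← lazardMap_of_nil]
    exact (lazardMap R S C).mem_idealRange _

theorem range_lazardMap :
    Set.range (lazardMap R S C) =
      (LieSubmodule.lieSpan R (FreeLieAlgebra R (S ⊕ C))
        (Set.range fun c : C => of R (Sum.inr c : S ⊕ C)) : Set (FreeLieAlgebra R (S ⊕ C))) := by
  ext z
  rw [← idealRange_lazardMap, SetLike.mem_coe,
    LieHom.mem_idealRange_iff _ lazardMap_isIdealMorphism]
  rfl

end LazardElimination

theorem lazard_elimination_part2_general (K : Type*) [Field K] (S C : Type*)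
    (φ : FreeLieAlgebra K (C × List S) →ₗ⁅K⁆ FreeLieAlgebra K (S ⊕ C))
    (hφ : φ = FreeLieAlgebra.lift K (fun p : C × List S =>
      p.2.foldl (fun x s => ⁅x, FreeLieAlgebra.of K (Sum.inl s)⁆)
        (FreeLieAlgebra.of K (Sum.inr p.1)))) :
    Function.Injective φ ∧
      Set.range φ = (LieSubmodule.lieSpan K (FreeLieAlgebra K (S ⊕ C))
        (Set.range (fun c : C => FreeLieAlgebra.of K (Sum.inr c))) :
          LieIdeal K (FreeLieAlgebra K (S ⊕ C))) := by
  subst hφ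
  exact ⟨LazardElimination.lazardMap_injective, LazardElimination.range_lazardMap⟩

/-- **Lazard Elimination, part 2.**
The Lie algebra morphism `φ : FreeLieAlgebra K (C × List S) → FreeLieAlgebra K (S ⊕ C)`
sending a generator `(c, [s₁, …, s_k])` to the left-normed bracket
`⁅⋯⁅⁅ι(inr c), ι(inl s₁)⁆, ι(inl s₂)⁆, ⋯, ι(inl s_k)⁆` is injective, and its image is
exactly the Lie ideal generated by the image of `C`. -/
theorem lazard_elimination_part2 (K : Type*) [Field K] [CharZero K] (S C : Type*)
    (φ : FreeLieAlgebra K (C × List S) →ₗ⁅K⁆ FreeLieAlgebra K (S ⊕ C))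
    (hφ : φ = FreeLieAlgebra.lift K (fun p : C × List S =>
      p.2.foldl (fun x s => ⁅x, FreeLieAlgebra.of K (Sum.inl s)⁆)
        (FreeLieAlgebra.of K (Sum.inr p.1)))) :
    Function.Injective φ ∧
      Set.range φ = (LieSubmodule.lieSpan K (FreeLieAlgebra K (S ⊕ C))
        (Set.range (fun c : C => FreeLieAlgebra.of K (Sum.inr c))) :
          LieIdeal K (FreeLieAlgebra K (S ⊕ C))) :=
  lazard_elimination_part2_general K S C φ hφ
end

section
/- Define planar rooted trees inductively: a planar rooted tree is either a leaf, or an internal node carrying an ordered list of at least two planar rooted subtrees. Fix n ≥ 2 and natural numbers λ₁, …, λ_{n-1}, and set Λ = λ₁ + ⋯ + λ_{n-1} and N = 1 + λ₁ + 2λ₂ + ⋯ + (n-1)λ_{n-1}. The set of planar rooted trees that have, for each i with 1 ≤ i ≤ n-1, exactly λ_i internal nodes with exactly i+1 children, and no internal nodes with more than n children, is finite; any such tree has exactly N leaves, and the cardinality c of this set satisfies N · c · λ₁! ⋯ λ_{n-1}! = C(N+Λ-1, Λ) · Λ!. -/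
/-!
A planar tree is determined by its Łukasiewicz word, the arities of its vertices in preorder, and
the words of trees are exactly the words without the letter `1` whose walk with steps `a - 1`
stays nonnegative until it reaches `-1` at the very end. The trees in question therefore
correspond to the rearrangements of `0^N 2^{λ₁} ⋯ n^{λ_{n-1}}` that are tree words. Such a
rearrangement has length `L = N + Λ` and letter sum `L - 1`, so by the cycle lemma exactly one of
its `L` rotations is a tree word, namely the one starting at the first time the walk attains its
minimum. Hence `c · L = L! / (N! λ₁! ⋯ λ_{n-1}!)`, and dividing by `L` and multiplying by `N`
turns the right-hand side into `C(L - 1, Λ) Λ! / (λ₁! ⋯ λ_{n-1}!)`.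
-/

/-- A planar rooted tree: either a leaf, or an internal node carrying an ordered list of
at least two planar rooted subtrees (encoded as the first two children together with the
list of the remaining children). -/
inductive PlanarTree : Type where
  | leaf : PlanarTree
  | node : PlanarTree → PlanarTree → List PlanarTree → PlanarTree

/-- The number of leaves of a planar rooted tree. -/
def PlanarTree.leaves : PlanarTree → ℕ
  | .leaf => 1
  | .node t₁ t₂ rest => t₁.leaves + t₂.leaves + (rest.attach.map fun x => x.1.leaves).sum
decreasing_by
  · simp_wf; omega
  · simp_wf; omega
  · simp_wf; have := List.sizeOf_lt_of_mem x.2; omega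

/-- The number of internal nodes of a planar rooted tree. -/
def PlanarTree.inodes : PlanarTree → ℕ
  | .leaf => 0
  | .node t₁ t₂ rest => 1 + t₁.inodes + t₂.inodes + (rest.attach.map fun x => x.1.inodes).sum
decreasing_by
  · simp_wf; omega
  · simp_wf; omega
  · simp_wf; have := List.sizeOf_lt_of_mem x.2; omega

/-- The number of internal nodes of a planar rooted tree having exactly `k` children. -/
def PlanarTree.arityCount (k : ℕ) : PlanarTree → ℕ
  | .leaf => 0
  | .node t₁ t₂ rest =>
      (if rest.length + 2 = k then 1 else 0) + t₁.arityCount k + t₂.arityCount k +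
        (rest.attach.map fun x => x.1.arityCount k).sum
decreasing_by
  · simp_wf; omega
  · simp_wf; omega
  · simp_wf; have := List.sizeOf_lt_of_mem x.2; omega

/-- `IsLukasiewicz m l`: reading `l` from the left with `m` subtrees still to be read, a letter `k`
fills one of them with a vertex with `k` children, and `l` ends exactly when nothing is pending. -/
def IsLukasiewicz : ℕ → List ℕ → Prop
  | m, [] => m = 0
  | m, k :: l => 0 < m ∧ IsLukasiewicz (m - 1 + k) l

@[simp] lemma isLukasiewicz_nil {m : ℕ} : IsLukasiewicz m [] ↔ m = 0 := Iff.rfl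

@[simp] lemma isLukasiewicz_cons {m k : ℕ} {l : List ℕ} :
    IsLukasiewicz m (k :: l) ↔ 0 < m ∧ IsLukasiewicz (m - 1 + k) l := Iff.rfl

lemma IsLukasiewicz.append {m₁ m₂ : ℕ} {l₁ l₂ : List ℕ} (h₁ : IsLukasiewicz m₁ l₁)
    (h₂ : IsLukasiewicz m₂ l₂) : IsLukasiewicz (m₁ + m₂) (l₁ ++ l₂) := by
  induction l₁ generalizing m₁ with
  | nil => simp_all
  | cons k l ih =>
    obtain ⟨hm, hl⟩ := h₁
    refine ⟨by omega, ?_⟩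
    rw [show m₁ + m₂ - 1 + k = m₁ - 1 + k + m₂ by omega]
    exact ih hl

lemma isLukasiewicz_iff {m : ℕ} {l : List ℕ} : IsLukasiewicz m l ↔
    l.length = l.sum + m ∧ ∀ k < l.length, k < (l.take k).sum + m := by
  induction l generalizing m with
  | nil => simp [eq_comm]
  | cons x l ih =>
    rw [isLukasiewicz_cons, ih]
    constructor
    · rintro ⟨hm, hlen, hpref⟩
      refine ⟨by simp only [List.length_cons, List.sum_cons]; omega, fun k hk => ?_⟩
      cases k with
      | zero => simpa using hm
      | succ k =>
        have := hpref k (by simpa using hk)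
        simp only [List.take_succ_cons, List.sum_cons]
        omega
    · rintro ⟨hlen, hpref⟩
      have hm : 0 < m := by simpa using hpref 0 (by simp)
      refine ⟨hm, by simp only [List.length_cons, List.sum_cons] at hlen; omega, fun k hk => ?_⟩
      have := hpref (k + 1) (by simpa using hk)
      simp only [List.take_succ_cons, List.sum_cons] at this
      omega

def prefixExcess (l : List ℕ) (k : ℕ) : ℤ := ((l.take k).sum : ℤ) - k

lemma isLukasiewicz_one_iff {l : List ℕ} (hs : l.sum + 1 = l.length) :
    IsLukasiewicz 1 l ↔ ∀ k < l.length, 0 ≤ prefixExcess l k := by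
  simp only [isLukasiewicz_iff, prefixExcess, hs, true_and]
  refine forall₂_congr fun k _ => ?_
  omega

lemma prefixExcess_rotate_of_le {l : List ℕ} {r k : ℕ} (hr : r ≤ l.length)
    (hk : k ≤ l.length - r) :
    prefixExcess (l.rotate r) k = prefixExcess l (r + k) - prefixExcess l r := by
  rw [List.rotate_eq_drop_append_take hr, prefixExcess, prefixExcess, prefixExcess,
    List.take_append_of_le_length (by simpa using hk), List.take_add, List.sum_append]
  push_cast; ring

lemma prefixExcess_rotate_of_ge {l : List ℕ} {r k : ℕ} (hr : r ≤ l.length)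
    (hk : l.length - r ≤ k) (hkL : k ≤ l.length) :
    prefixExcess (l.rotate r) k =
      prefixExcess l (k - (l.length - r)) + prefixExcess l l.length - prefixExcess l r := by
  obtain ⟨j, rfl⟩ := Nat.exists_eq_add_of_le hk
  have hdrop : (l.drop r).length = l.length - r := List.length_drop ..
  have hsum : (l.take r).sum + (l.drop r).sum = l.sum := by
    rw [← List.sum_append, List.take_append_drop]
  rw [List.rotate_eq_drop_append_take hr, prefixExcess, prefixExcess, prefixExcess,
    prefixExcess, ← hdrop, List.take_length_add_append, List.take_take, List.take_length,
    List.sum_append, min_eq_left (by omega), Nat.add_sub_cancel_left]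
  simp only [Nat.cast_add, hdrop]
  omega

lemma isLukasiewicz_one_rotate_iff {l : List ℕ} (hs : l.sum + 1 = l.length) {r : ℕ}
    (hr : r < l.length) : IsLukasiewicz 1 (l.rotate r) ↔ ∀ j < l.length,
      prefixExcess l r ≤ prefixExcess l j ∧ (j < r → prefixExcess l r < prefixExcess l j) := by
  have hL : prefixExcess l l.length = -1 := by rw [prefixExcess, List.take_length]; omega
  rw [isLukasiewicz_one_iff (by simpa [(List.rotate_perm l r).sum_eq] using hs),
    List.length_rotate]
  constructor
  · intro h j hj
    refine ⟨?_, fun hjr => ?_⟩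
    · rcases lt_or_ge j r with hjr | hjr
      · have := h (j + (l.length - r)) (by omega)
        rw [prefixExcess_rotate_of_ge hr.le (by omega) (by omega), Nat.add_sub_cancel] at this
        omega
      · have := h (j - r) (by omega)
        rw [prefixExcess_rotate_of_le hr.le (by omega), Nat.add_sub_cancel' hjr] at this
        omega
    · have := h (j + (l.length - r)) (by omega)
      rw [prefixExcess_rotate_of_ge hr.le (by omega) (by omega), Nat.add_sub_cancel] at this
      omega
  · intro h k hk
    rcases lt_or_ge k (l.length - r) with hkr | hkr
    · rw [prefixExcess_rotate_of_le hr.le hkr.le]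
      have := (h (r + k) (by omega)).1
      omega
    · rw [prefixExcess_rotate_of_ge hr.le hkr hk.le]
      have := (h (k - (l.length - r)) (by omega)).2 (by omega)
      omega

lemma existsUnique_first_argmin {β : Type*} [LinearOrder β] (f : ℕ → β) {L : ℕ} (hL : 0 < L) :
    ∃! r, r < L ∧ ∀ j < L, f r ≤ f j ∧ (j < r → f r < f j) := by
  obtain ⟨m, hm, hmin⟩ := (Finset.range L).exists_min_image f ⟨0, by simpa⟩
  have hex : ∃ r, r < L ∧ f r = f m := ⟨m, by simpa using hm, rfl⟩
  refine ⟨Nat.find hex, ?_, ?_⟩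
  · obtain ⟨hrL, hr⟩ := Nat.find_spec hex
    have hle : ∀ j < L, f (Nat.find hex) ≤ f j := fun j hj => by rw [hr]; exact hmin j (by simpa)
    refine ⟨hrL, fun j hj => ⟨hle j hj, fun hjr => (hle j hj).lt_of_ne fun h => ?_⟩⟩
    exact Nat.find_min hex hjr ⟨hj, h.symm.trans hr⟩
  · rintro r ⟨hrL, hr⟩
    have hfr : f r = f m := le_antisymm (hr m (by simpa using hm)).1 (hmin r (by simpa))
    refine ((Nat.find_min' hex ⟨hrL, hfr⟩).eq_or_lt.resolve_right fun hlt => ?_).symm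
    have := (hr _ (Nat.find_spec hex).1).2 hlt
    rw [(Nat.find_spec hex).2, hfr] at this
    exact lt_irrefl _ this

theorem existsUnique_rotate_isLukasiewicz {l : List ℕ} (hs : l.sum + 1 = l.length) :
    ∃! r, r < l.length ∧ IsLukasiewicz 1 (l.rotate r) := by
  obtain ⟨r, hr, huniq⟩ := existsUnique_first_argmin (prefixExcess l) (by omega : 0 < l.length)
  refine ⟨r, ⟨hr.1, (isLukasiewicz_one_rotate_iff hs hr.1).2 hr.2⟩, fun r' hr' => huniq r' ?_⟩
  exact ⟨hr'.1, (isLukasiewicz_one_rotate_iff hs hr'.1).1 hr'.2⟩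

namespace PlanarTree

def code : PlanarTree → List ℕ
  | leaf => [0]
  | node t₁ t₂ rest =>
      (rest.length + 2) :: (t₁.code ++ t₂.code ++ rest.attach.flatMap fun x => x.1.code)
decreasing_by
  · simp_wf; omega
  · simp_wf; omega
  · simp_wf; have := List.sizeOf_lt_of_mem x.2; omega

def codes (ts : List PlanarTree) : List ℕ := ts.flatMap code

@[simp] lemma codes_nil : codes [] = [] := rfl

@[simp] lemma codes_cons (t : PlanarTree) (ts : List PlanarTree) :
    codes (t :: ts) = t.code ++ codes ts := List.flatMap_cons

@[simp] lemma code_leaf : code leaf = [0] := by rw [code]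

lemma codes_append (ts us : List PlanarTree) : codes (ts ++ us) = codes ts ++ codes us :=
  List.flatMap_append

lemma code_node (t₁ t₂ : PlanarTree) (rest : List PlanarTree) :
    (node t₁ t₂ rest).code = (rest.length + 2) :: codes (t₁ :: t₂ :: rest) := by
  rw [code]
  simp [codes, List.flatMap_subtype]

lemma codes_node_cons (t₁ t₂ : PlanarTree) (r ts : List PlanarTree) :
    codes (node t₁ t₂ r :: ts) = (r.length + 2) :: codes (t₁ :: t₂ :: (r ++ ts)) := by
  simp [code_node, codes_append]

lemma code_ne_nil (t : PlanarTree) : t.code ≠ [] := by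
  cases t <;> simp [code_node]

lemma leaves_node (t₁ t₂ : PlanarTree) (rest : List PlanarTree) :
    (node t₁ t₂ rest).leaves = t₁.leaves + t₂.leaves + (rest.map leaves).sum := by
  rw [leaves, List.attach_map_val]

lemma arityCount_node (k : ℕ) (t₁ t₂ : PlanarTree) (rest : List PlanarTree) :
    (node t₁ t₂ rest).arityCount k = (if rest.length + 2 = k then 1 else 0) +
      t₁.arityCount k + t₂.arityCount k + (rest.map (arityCount k)).sum := by
  rw [arityCount, List.attach_map_val]

theorem forest_induction {motive : List PlanarTree → Prop} (nil : motive [])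
    (leaf : ∀ ts, motive ts → motive (leaf :: ts))
    (node : ∀ t₁ t₂ r ts, motive (t₁ :: t₂ :: (r ++ ts)) → motive (node t₁ t₂ r :: ts)) :
    ∀ ts, motive ts
  | [] => nil
  | .leaf :: ts => leaf ts (forest_induction nil leaf node ts)
  | .node t₁ t₂ r :: ts => node t₁ t₂ r ts (forest_induction nil leaf node _)
termination_by ts => (ts.map sizeOf).sum
decreasing_by
  · simp
  · have h : ∀ l : List PlanarTree, (l.map sizeOf).sum < sizeOf l := by
      intro l
      induction l with
      | nil => simp
      | cons a l ih => simp only [List.map_cons, List.sum_cons, List.cons.sizeOf_spec]; omega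
    have := h r
    simp only [List.map_cons, List.map_append, List.sum_cons, List.sum_append,
      PlanarTree.node.sizeOf_spec]
    omega

lemma count_zero_codes : ∀ ts : List PlanarTree, (codes ts).count 0 = (ts.map leaves).sum := by
  refine forest_induction (by simp) (fun ts ih => ?_) (fun t₁ t₂ r ts ih => ?_)
  · simp only [codes_cons, code_leaf, List.singleton_append, List.count_cons_self, ih,
      List.map_cons, List.sum_cons, leaves]
    omega
  · rw [codes_node_cons, List.count_cons_of_ne (by omega), ih]
    simp only [List.map_cons, List.map_append, List.sum_cons, List.sum_append, leaves_node]
    omega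

lemma count_codes {k : ℕ} (hk : k ≠ 0) :
    ∀ ts : List PlanarTree, (codes ts).count k = (ts.map (arityCount k)).sum := by
  refine forest_induction (by simp) (fun ts ih => ?_) (fun t₁ t₂ r ts ih => ?_)
  · simp [ih, arityCount, Ne.symm hk]
  · simp only [codes_node_cons, List.count_cons, ih, List.map_cons, List.map_append,
      List.sum_cons, List.sum_append, arityCount_node, beq_iff_eq]
    split_ifs <;> omega

lemma one_notMem_codes : ∀ ts : List PlanarTree, 1 ∉ codes ts := by
  refine forest_induction (by simp) (fun ts ih => ?_) (fun t₁ t₂ r ts ih => ?_)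
  · simpa using ih
  · rw [codes_node_cons]; simpa using ih

lemma isLukasiewicz_codes : ∀ ts : List PlanarTree, IsLukasiewicz ts.length (codes ts) := by
  refine forest_induction (by simp) (fun ts ih => ?_) (fun t₁ t₂ r ts ih => ?_)
  · simpa [add_comm] using (show IsLukasiewicz 1 [0] by simp).append ih
  · rw [codes_node_cons]
    refine ⟨by simp, ?_⟩
    convert ih using 1
    simp only [List.length_cons, List.length_append]
    omega

lemma codes_injective : Function.Injective codes := by
  intro ts
  induction ts using forest_induction with
  | nil =>
    rintro (_ | ⟨u, us⟩) h
    · rfl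
    · simp [code_ne_nil] at h
  | leaf ts ih =>
    rintro (_ | ⟨_ | ⟨u₁, u₂, q⟩, us⟩) h
    · simp at h
    · simp only [codes_cons, code_leaf, List.singleton_append, List.cons.injEq, true_and] at h
      rw [ih h]
    · rw [codes_node_cons] at h; simp at h
  | node t₁ t₂ r ts ih =>
    rintro (_ | ⟨_ | ⟨u₁, u₂, q⟩, us⟩) h
    · simp [code] at h
    · rw [codes_node_cons] at h; simp at h
    · simp only [codes_node_cons, List.cons.injEq, Nat.add_right_cancel_iff] at h
      obtain ⟨hlen, h⟩ := h
      obtain ⟨rfl, rfl, hrest⟩ : t₁ = u₁ ∧ t₂ = u₂ ∧ r ++ ts = q ++ us := by simpa using ih h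
      obtain ⟨rfl, rfl⟩ := List.append_inj hrest hlen
      rfl

lemma exists_codes_eq {l : List ℕ} (h1 : 1 ∉ l) :
    ∀ {m}, IsLukasiewicz m l → ∃ ts : List PlanarTree, ts.length = m ∧ codes ts = l := by
  induction l with
  | nil => intro m hm; exact ⟨[], by simpa using hm.symm, rfl⟩
  | cons k l ih =>
    rintro m ⟨hm, hl⟩
    obtain ⟨h1k, h1l⟩ : 1 ≠ k ∧ 1 ∉ l := by simpa using h1
    obtain ⟨ts, hts, rfl⟩ := ih h1l hl
    rcases k with _ | _ | k
    · exact ⟨leaf :: ts, by rw [List.length_cons]; omega, by simp⟩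
    · contradiction
    · obtain ⟨_ | ⟨t₁, _ | ⟨t₂, r⟩⟩, us, rfl, hr⟩ : ∃ r us, r ++ us = ts ∧ r.length = k + 2 :=
        ⟨ts.take (k + 2), ts.drop (k + 2), List.take_append_drop _ _,
          by rw [List.length_take]; omega⟩
      · simp at hr
      · simp at hr
      have hr : r.length = k := by simpa using hr
      refine ⟨node t₁ t₂ r :: us, ?_, by rw [codes_node_cons, hr]; rfl⟩
      simp only [List.cons_append, List.length_cons, List.length_append] at hts ⊢
      omega

lemma code_injective : Function.Injective code := fun t u h =>
  List.singleton_injective (codes_injective (by simpa using h))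

lemma isLukasiewicz_code (t : PlanarTree) : IsLukasiewicz 1 t.code := by
  simpa using isLukasiewicz_codes [t]

lemma length_code (t : PlanarTree) : t.code.length = t.code.sum + 1 :=
  (isLukasiewicz_iff.1 t.isLukasiewicz_code).1

lemma range_code : Set.range code = {l | IsLukasiewicz 1 l ∧ 1 ∉ l} := by
  ext l
  constructor
  · rintro ⟨t, rfl⟩
    exact ⟨t.isLukasiewicz_code, by simpa using one_notMem_codes [t]⟩
  · rintro ⟨hl, h1⟩
    obtain ⟨_ | ⟨t, _ | _⟩, hlen, rfl⟩ := exists_codes_eq h1 hl <;> simp at hlen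
    exact ⟨t, by simp⟩

lemma count_code_zero (t : PlanarTree) : t.code.count 0 = t.leaves := by
  simpa using count_zero_codes [t]

lemma count_code {k : ℕ} (hk : k ≠ 0) (t : PlanarTree) : t.code.count k = t.arityCount k := by
  simpa using count_codes hk [t]

end PlanarTree

theorem card_mul_eq_card_of_existsUnique_rotate {α : Type*} {s : Set (List α)}
    {p : List α → Prop} {L : ℕ} (hlen : ∀ w ∈ s, w.length = L)
    (hrot : ∀ w ∈ s, ∀ r, w.rotate r ∈ s) (huniq : ∀ w ∈ s, ∃! r, r < L ∧ p (w.rotate r)) :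
    Nat.card {v // v ∈ s ∧ p v} * L = Nat.card s := by
  have rotate_sub_rotate {w : List α} (hw : w ∈ s) (r : Fin L) :
      (w.rotate (L - r)).rotate r = w ∧ (w.rotate r).rotate (L - r) = w := by
    rw [List.rotate_rotate, List.rotate_rotate, Nat.sub_add_cancel r.2.le,
      Nat.add_sub_cancel' r.2.le, ← hlen w hw, List.rotate_length]
    exact ⟨rfl, rfl⟩
  -- count the pairs `(w, r)` with `p (w.rotate r)` in two ways
  let P := {x : List α × Fin L // x.1 ∈ s ∧ p (x.1.rotate x.2)}
  let toGood : P ≃ {v // v ∈ s ∧ p v} × Fin L :=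
    { toFun x := (⟨x.1.1.rotate x.1.2, hrot _ x.2.1 _, x.2.2⟩, x.1.2)
      invFun y := ⟨(y.1.1.rotate (L - y.2), y.2), hrot _ y.1.2.1 _,
        by rw [(rotate_sub_rotate y.1.2.1 y.2).1]; exact y.1.2.2⟩
      left_inv x := by ext <;> simp [(rotate_sub_rotate x.2.1 x.1.2).2]
      right_inv y := by ext <;> simp [(rotate_sub_rotate y.1.2.1 y.2).1] }
  have toWord : P ≃ s := Equiv.ofBijective (fun x => ⟨x.1.1, x.2.1⟩) <| by
    refine ⟨fun x y hxy => ?_, fun w => ?_⟩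
    · have h : x.1.1 = y.1.1 := congrArg Subtype.val hxy
      obtain ⟨r, -, hr⟩ := huniq _ x.2.1
      have hxr := hr x.1.2 ⟨x.1.2.2, x.2.2⟩
      have hyr := hr y.1.2 ⟨y.1.2.2, h ▸ y.2.2⟩
      exact Subtype.ext (Prod.ext h (Fin.ext (hxr.trans hyr.symm)))
    · obtain ⟨r, ⟨hrL, hr⟩, -⟩ := huniq _ w.2
      exact ⟨⟨(w, ⟨r, hrL⟩), w.2, hr⟩, rfl⟩
  rw [← Nat.card_congr toWord, Nat.card_congr toGood, Nat.card_prod, Nat.card_fin]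

section PermutationClass

open Equiv MulAction

variable {α : Type*} [DecidableEq α]

lemma mem_orbit_domMulAct_iff {X : Type*} [Fintype X] {f g : X → α} :
    f ∈ orbit (Perm X)ᵈᵐᵃ g ↔
      ∀ a, Fintype.card {x // f x = a} = Fintype.card {x // g x = a} := by
  constructor
  · rintro ⟨c, rfl⟩ a
    exact Fintype.card_congr (subtypeEquiv (DomMulAct.mk.symm c) fun _ => Iff.rfl)
  · intro h
    let σ : Perm X := ofFiberEquiv fun a => Fintype.equivOfCardEq (h a)
    exact ⟨DomMulAct.mk σ, funext fun x => ofFiberEquiv_map _ x⟩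

lemma card_fiber_eq_count_ofFn {L : ℕ} (f : Fin L → α) (a : α) :
    Fintype.card {i // f i = a} = (List.ofFn f).count a := by
  rw [Fintype.card_subtype, ← Multiset.coe_count, ← Fin.univ_val_map, Multiset.count_map,
    Finset.card_def, Finset.filter_val]
  simp_rw [eq_comm]

lemma ofFn_perm_ofFn_iff {L : ℕ} {f g : Fin L → α} :
    (List.ofFn f).Perm (List.ofFn g) ↔ f ∈ orbit (Perm (Fin L))ᵈᵐᵃ g := by
  simp only [List.perm_iff_count, mem_orbit_domMulAct_iff, card_fiber_eq_count_ofFn]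

theorem card_perm_mul_prod_factorial_count (w₀ : List α) :
    Nat.card {w : List α // w.Perm w₀} * ∏ a ∈ w₀.toFinset, (w₀.count a).factorial =
      w₀.length.factorial := by
  set L := w₀.length
  let f₀ : Fin L → α := fun i => w₀[i]
  have hf₀ : List.ofFn f₀ = w₀ := List.ofFn_getElem
  have horbit : orbit (Perm (Fin L))ᵈᵐᵃ f₀ ≃ {w : List α // w.Perm w₀} := by
    refine Equiv.ofBijective (fun f => ⟨List.ofFn f.1, hf₀ ▸ ofFn_perm_ofFn_iff.2 f.2⟩)
      ⟨fun f g h => Subtype.ext (List.ofFn_injective (congrArg Subtype.val h)), ?_⟩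
    rintro ⟨w, hw⟩
    have hlen : w.length = L := hw.length_eq
    have hw' : List.ofFn (fun i : Fin L => w[i.1]) = w := by
      apply List.ext_getElem <;> simp [hlen]
    exact ⟨⟨_, ofFn_perm_ofFn_iff.1 (hw'.symm ▸ hf₀.symm ▸ hw)⟩, Subtype.ext hw'⟩
  have hstab : Nat.card (stabilizer (Perm (Fin L))ᵈᵐᵃ f₀) =
      ∏ a ∈ w₀.toFinset, (w₀.count a).factorial := by
    have e : stabilizer (Perm (Fin L))ᵈᵐᵃ f₀ ≃ {g : Perm (Fin L) // f₀ ∘ g = f₀} :=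
      subtypeEquiv DomMulAct.mk.symm fun _ => DomMulAct.mem_stabilizer_iff
    rw [Nat.card_congr e, Nat.card_eq_fintype_card, DomMulAct.stabilizer_card']
    have himage : Finset.univ.image f₀ = w₀.toFinset := by
      ext a; simp [f₀, List.mem_iff_getElem, Fin.exists_iff, L]
    refine Finset.prod_congr himage fun a _ => ?_
    rw [card_fiber_eq_count_ofFn, hf₀]
  rw [← Nat.card_congr horbit, ← hstab, ← Nat.card_prod,
    Nat.card_congr (orbitProdStabilizerEquivGroup _ f₀), Nat.card_congr DomMulAct.mk.symm,
    Nat.card_perm, Nat.card_fin]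

end PermutationClass

section Corolla

open PlanarTree

variable {n : ℕ} {lam : Fin (n - 1) → ℕ} {N : ℕ}

variable (n lam) in
def corollaWord (N : ℕ) : List ℕ :=
  List.replicate N 0 ++
    (List.finRange (n - 1)).flatMap fun i => List.replicate (lam i) ((i : ℕ) + 2)

variable (n lam) in
def IsCorollaTree (t : PlanarTree) : Prop :=
  (∀ i : Fin (n - 1), t.arityCount ((i : ℕ) + 2) = lam i) ∧ ∀ k, n < k → t.arityCount k = 0

lemma count_corollaWord_zero : (corollaWord n lam N).count 0 = N := by
  simp [corollaWord, List.count_eq_zero]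

lemma count_corollaWord_add_two (i : Fin (n - 1)) :
    (corollaWord n lam N).count ((i : ℕ) + 2) = lam i := by
  simp [corollaWord, List.count_flatMap, List.count_replicate, Function.comp_def, Fin.val_inj,
    ← Fin.sum_univ_def]

lemma count_corollaWord_eq_zero {k : ℕ} (h0 : k ≠ 0)
    (h : ∀ i : Fin (n - 1), k ≠ (i : ℕ) + 2) :
    (corollaWord n lam N).count k = 0 := by
  simp [corollaWord, List.count_eq_zero, h0, h]

lemma length_corollaWord : (corollaWord n lam N).length = N + ∑ i, lam i := by
  simp [corollaWord, List.length_flatMap, Fin.sum_univ_def]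

lemma sum_corollaWord :
    (corollaWord n lam N).sum = ∑ i : Fin (n - 1), ((i : ℕ) + 1) * lam i + ∑ i, lam i := by
  simp only [corollaWord, List.sum_append, List.sum_replicate, smul_eq_mul, mul_zero, zero_add,
    List.flatMap_def, List.sum_flatten, List.map_map, Function.comp_def,
    ← Fin.sum_univ_def, ← Finset.sum_add_distrib]
  exact Finset.sum_congr rfl fun i _ => by ring

lemma code_perm_corollaWord_iff {t : PlanarTree} :
    t.code.Perm (corollaWord n lam N) ↔ IsCorollaTree n lam t ∧ t.leaves = N := by
  rw [List.perm_iff_count]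
  constructor
  · intro h
    refine ⟨⟨fun i => ?_, fun k hk => ?_⟩, ?_⟩
    · rw [← count_code (by omega), h, count_corollaWord_add_two]
    · rw [← count_code (by omega), h, count_corollaWord_eq_zero (by omega) (by omega)]
    · rw [← count_code_zero, h, count_corollaWord_zero]
  · rintro ⟨⟨harity, hmax⟩, rfl⟩ k
    rcases eq_or_ne k 0 with rfl | hk0
    · rw [count_code_zero, count_corollaWord_zero]
    by_cases hk : ∃ i : Fin (n - 1), k = i + 2
    · obtain ⟨i, rfl⟩ := hk
      rw [count_code hk0, harity, count_corollaWord_add_two]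
    push Not at hk
    rw [count_corollaWord_eq_zero hk0 hk]
    rcases eq_or_ne k 1 with rfl | hk1
    · exact List.count_eq_zero.2 (by simpa using one_notMem_codes [t])
    · have hkn : n < k := by_contra fun hkn =>
        hk ⟨k - 2, by omega⟩ (Nat.sub_add_cancel (by omega)).symm
      rw [count_code hk0, hmax k hkn]

lemma leaves_eq_of_isCorollaTree {t : PlanarTree} (ht : IsCorollaTree n lam t) :
    t.leaves = 1 + ∑ i : Fin (n - 1), ((i : ℕ) + 1) * lam i := by
  have h := code_perm_corollaWord_iff.2 ⟨ht, rfl⟩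
  have hlen := t.length_code
  rw [h.length_eq, h.sum_eq, length_corollaWord, sum_corollaWord] at hlen
  omega

lemma image_code_setOf_isCorollaTree (hN : N = 1 + ∑ i : Fin (n - 1), ((i : ℕ) + 1) * lam i) :
    code '' {t | IsCorollaTree n lam t} =
      {l | l.Perm (corollaWord n lam N) ∧ IsLukasiewicz 1 l} := by
  ext l
  constructor
  · rintro ⟨t, ht, rfl⟩
    exact ⟨code_perm_corollaWord_iff.2 ⟨ht, hN ▸ leaves_eq_of_isCorollaTree ht⟩,
      t.isLukasiewicz_code⟩
  · rintro ⟨hperm, hl⟩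
    have h1 : 1 ∉ l := by
      rw [← List.count_eq_zero, hperm.count_eq, count_corollaWord_eq_zero one_ne_zero (by omega)]
    obtain ⟨t, rfl⟩ : l ∈ Set.range code := range_code ▸ ⟨hl, h1⟩
    exact ⟨t, (code_perm_corollaWord_iff.1 hperm).1, rfl⟩

lemma sum_corollaWord_add_one (hN : N = 1 + ∑ i : Fin (n - 1), ((i : ℕ) + 1) * lam i) :
    (corollaWord n lam N).sum + 1 = (corollaWord n lam N).length := by
  rw [sum_corollaWord, length_corollaWord, hN]
  omega

lemma prod_factorial_count_corollaWord :
    ∏ a ∈ (corollaWord n lam N).toFinset, ((corollaWord n lam N).count a).factorial =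
      N.factorial * ∏ i, (lam i).factorial := by
  have hsub : (corollaWord n lam N).toFinset ⊆
      insert 0 (Finset.univ.image fun i : Fin (n - 1) => (i : ℕ) + 2) := by
    intro a ha
    simp only [corollaWord, List.mem_toFinset, List.mem_append, List.mem_replicate,
      List.mem_flatMap, List.mem_finRange, true_and] at ha
    simp only [Finset.mem_insert, Finset.mem_image, Finset.mem_univ, true_and]
    rcases ha with ⟨-, rfl⟩ | ⟨i, -, rfl⟩
    exacts [Or.inl rfl, Or.inr ⟨i, rfl⟩]
  rw [Finset.prod_subset hsub fun a _ ha => by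
      rw [List.count_eq_zero.2 (by simpa using ha), Nat.factorial_zero],
    Finset.prod_insert (by simp), Finset.prod_image fun i _ j _ h => Fin.ext (by simpa using h),
    count_corollaWord_zero]
  simp_rw [count_corollaWord_add_two]

theorem card_setOf_isCorollaTree_mul (hN : N = 1 + ∑ i : Fin (n - 1), ((i : ℕ) + 1) * lam i) :
    Nat.card {t | IsCorollaTree n lam t} * (N + ∑ i, lam i) *
      (N.factorial * ∏ i, (lam i).factorial) = (N + ∑ i, lam i).factorial := by
  have hs := sum_corollaWord_add_one hN
  rw [← Nat.card_image_of_injective code_injective, image_code_setOf_isCorollaTree hN,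
    ← length_corollaWord, ← prod_factorial_count_corollaWord,
    ← card_perm_mul_prod_factorial_count]
  congr 1
  exact card_mul_eq_card_of_existsUnique_rotate (s := {l | l.Perm (corollaWord n lam N)})
    (fun w hw => hw.length_eq) (fun w hw r => (List.rotate_perm w r).trans hw)
    fun w hw => hw.length_eq ▸
      existsUnique_rotate_isLukasiewicz (by rw [hw.sum_eq, hw.length_eq, hs])

theorem setOf_isCorollaTree_finite : {t | IsCorollaTree n lam t}.Finite := by
  refine Set.Finite.of_finite_image ?_ code_injective.injOn
  rw [image_code_setOf_isCorollaTree rfl]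
  exact (corollaWord n lam _).permutations.finite_toSet.subset fun l hl =>
    List.mem_permutations.2 hl.1

end Corolla

theorem card_trees_from_corollas_general (n : ℕ) (lam : Fin (n - 1) → ℕ)
    (Lam N : ℕ) (hLam : Lam = ∑ i, lam i) (hN : N = 1 + ∑ i : Fin (n - 1), ((i : ℕ) + 1) * lam i) :
    {t : PlanarTree | (∀ i : Fin (n - 1), t.arityCount ((i : ℕ) + 2) = lam i) ∧
        ∀ k, n < k → t.arityCount k = 0}.Finite ∧
      (∀ t : PlanarTree, ((∀ i : Fin (n - 1), t.arityCount ((i : ℕ) + 2) = lam i) ∧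
        ∀ k, n < k → t.arityCount k = 0) → t.leaves = N) ∧
      N * Nat.card {t : PlanarTree |
            (∀ i : Fin (n - 1), t.arityCount ((i : ℕ) + 2) = lam i) ∧
            ∀ k, n < k → t.arityCount k = 0} * ∏ i, Nat.factorial (lam i) =
        Nat.choose (N + Lam - 1) Lam * Nat.factorial Lam := by
  refine ⟨setOf_isCorollaTree_finite, fun t ht => hN ▸ leaves_eq_of_isCorollaTree ht, ?_⟩
  have hcard := card_setOf_isCorollaTree_mul hN
  rw [← hLam] at hcard
  show N * Nat.card {t | IsCorollaTree n lam t} * _ = _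
  obtain ⟨M, rfl⟩ : ∃ M, N = M + 1 := ⟨N - 1, by omega⟩
  refine Nat.eq_of_mul_eq_mul_left (by positivity : 0 < (M + 1 + Lam) * M.factorial) ?_
  calc _ = Nat.card {t | IsCorollaTree n lam t} * (M + 1 + Lam) *
        ((M + 1).factorial * ∏ i, (lam i).factorial) := by rw [Nat.factorial_succ]; ring
    _ = (M + Lam + 1).factorial := by rw [hcard, add_right_comm]
    _ = _ := by
      rw [Nat.factorial_succ, ← Nat.add_choose_mul_factorial_mul_factorial M Lam,
        show M + 1 + Lam - 1 = M + Lam by omega]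
      ring

/-- **Counting trees built from a multiset of corollas.** Fix `n ≥ 2` and natural numbers
`λ₁, …, λ_{n-1}` (here `lam i` is `λ_{i+1}`, counting internal nodes with `i+2` children),
and set `Λ = λ₁ + ⋯ + λ_{n-1}`, `N = 1 + λ₁ + 2λ₂ + ⋯ + (n-1)λ_{n-1}`. The set of planar
rooted trees having exactly `λ_i` internal nodes with `i+1` children (`1 ≤ i ≤ n-1`) and no
internal node with more than `n` children is finite, every such tree has exactly `N`
leaves, and its cardinality `c` satisfies
`N · c · λ₁!⋯λ_{n-1}! = C(N+Λ-1, Λ) · Λ!`. -/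
theorem card_trees_from_corollas (n : ℕ) (hn : 2 ≤ n) (lam : Fin (n - 1) → ℕ)
    (Lam N : ℕ) (hLam : Lam = ∑ i, lam i) (hN : N = 1 + ∑ i : Fin (n - 1), ((i : ℕ) + 1) * lam i) :
    {t : PlanarTree | (∀ i : Fin (n - 1), t.arityCount ((i : ℕ) + 2) = lam i) ∧
        ∀ k, n < k → t.arityCount k = 0}.Finite ∧
      (∀ t : PlanarTree, ((∀ i : Fin (n - 1), t.arityCount ((i : ℕ) + 2) = lam i) ∧
        ∀ k, n < k → t.arityCount k = 0) → t.leaves = N) ∧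
      N * Nat.card {t : PlanarTree |
            (∀ i : Fin (n - 1), t.arityCount ((i : ℕ) + 2) = lam i) ∧
            ∀ k, n < k → t.arityCount k = 0} * ∏ i, Nat.factorial (lam i) =
        Nat.choose (N + Lam - 1) Lam * Nat.factorial Lam :=
  card_trees_from_corollas_general n lam Lam N hLam hN
end
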